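/- arXiv:0903.3332 — 4 statements merged into one kernel-verified Lean document; each statement's English description precedes it below -/
import Mathlib

section
/- For any boundary point ζ of the unit ball, any interior point z, and any Möbius transformation g of the ball, one has j(g,ζ) ≥ ((1-|z|)^2/4) · j(g,z). Consequently, if the horospherical Poincaré series P(ζ,s) = Σ_{g∈G} j(g,ζ)^s of a Kleinian group G converges at some ζ ∈ S, then the ordinary Poincaré series P(z,s) = Σ_{g∈G} j(g,z)^s converges for every z in the ball. -/
/-!
Write `w = g⁻¹(0)`, so that `j(g,x) = (1-|w|²)/D_w(x)` with
`D_w(x) = 1 - 2⟪x,w⟫ + |x|²|w|²`. By Cauchy–Schwarz, `D_w(x)` lies between `(1-|x||w|)²` and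
`(1+|x||w|)²`, hence `D_w(z) ≥ (1-|z|)²` and `D_w(ζ) ≤ 4` on the closed unit ball. Thus
`(1-|z|)²/4 · j(g,z) ≤ (1-|w|²)/4 ≤ j(g,ζ)`, and the Poincaré series at `z` is dominated termwise
by a constant multiple of the one at `ζ`.
-/

open MeasureTheory Filter
open scoped RealInnerProductSpace ENNReal BigOperators Topology

noncomputable section

/-- The ambient Euclidean space `ℝ^{N+1}`; hyperbolic space is its open unit
ball `𝔻` and the boundary sphere `𝕊` is the unit sphere. -/
abbrev Amb (N : ℕ) := EuclideanSpace ℝ (Fin (N + 1))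

/-- The conformal derivative `j(g,z) = (1-|g⁻¹0|²)/(|z*-g⁻¹0|²|z|²)` of a ball
automorphism `g` at a point `z` of the closed unit ball, where `z* = z/|z|²`
denotes inversion of `z` in the unit sphere.  It is written here via the
identity `|z*-w|²|z|² = 1 - 2⟪z,w⟫ + |z|²|w|²` (valid for `z ≠ 0`), which also
gives the correct value `1-|g⁻¹0|²` at `z = 0`; for `|z| = 1` it reduces to
`(1-|g⁻¹0|²)/|z-g⁻¹0|²`. -/
def cderiv {N : ℕ} (g : Equiv.Perm (Amb N)) (z : Amb N) : ℝ :=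
  (1 - ‖g.symm 0‖ ^ 2) /
    (1 - 2 * (inner ℝ z (g.symm 0) : ℝ) + ‖z‖ ^ 2 * ‖g.symm 0‖ ^ 2)

/-- `g` is a Möbius transformation of the closed unit ball: a homeomorphic
bijection of the ambient space preserving the closed ball, the open ball and
the boundary sphere, which is conformal with conformal factor `cderiv g`
(the metric characterisation `|gx-gy|² = j(g,x)j(g,y)|x-y|²` of Möbius maps). -/
structure IsMobius {N : ℕ} (g : Equiv.Perm (Amb N)) : Prop where
  maps_ball : ∀ z : Amb N, ‖z‖ ≤ 1 → ‖g z‖ ≤ 1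
  maps_open : ∀ z : Amb N, ‖z‖ < 1 → ‖g z‖ < 1
  maps_sphere : ∀ z : Amb N, ‖z‖ = 1 → ‖g z‖ = 1
  symm_maps_ball : ∀ z : Amb N, ‖z‖ ≤ 1 → ‖g.symm z‖ ≤ 1
  symm_maps_open : ∀ z : Amb N, ‖z‖ < 1 → ‖g.symm z‖ < 1
  continuous : Continuous fun z : Amb N => g z
  continuous_symm : Continuous fun z : Amb N => g.symm z
  conf : ∀ x y : Amb N, ‖x‖ ≤ 1 → ‖y‖ ≤ 1 →
    ‖g x - g y‖ ^ 2 = cderiv g x * cderiv g y * ‖x - y‖ ^ 2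

section ConformalDenom

variable {E : Type*} [NormedAddCommGroup E] [InnerProductSpace ℝ E]

def conformalDenom (w z : E) : ℝ :=
  1 - 2 * ⟪z, w⟫ + ‖z‖ ^ 2 * ‖w‖ ^ 2

theorem sq_one_sub_norm_mul_norm_le_conformalDenom (w z : E) :
    (1 - ‖z‖ * ‖w‖) ^ 2 ≤ conformalDenom w z := by
  have := real_inner_le_norm z w
  unfold conformalDenom
  nlinarith

theorem conformalDenom_le_sq_one_add_norm_mul_norm (w z : E) :
    conformalDenom w z ≤ (1 + ‖z‖ * ‖w‖) ^ 2 := by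
  have := neg_le_of_abs_le (abs_real_inner_le_norm z w)
  unfold conformalDenom
  nlinarith

theorem conformalDenom_pos {w z : E} (h : ‖z‖ * ‖w‖ < 1) : 0 < conformalDenom w z :=
  (pow_pos (sub_pos.2 h) 2).trans_le (sq_one_sub_norm_mul_norm_le_conformalDenom w z)

theorem sq_one_sub_norm_le_conformalDenom {w z : E} (hz : ‖z‖ ≤ 1) (hw : ‖w‖ ≤ 1) :
    (1 - ‖z‖) ^ 2 ≤ conformalDenom w z := by
  refine le_trans ?_ (sq_one_sub_norm_mul_norm_le_conformalDenom w z)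
  have : ‖z‖ * ‖w‖ ≤ ‖z‖ := mul_le_of_le_one_right (norm_nonneg z) hw
  gcongr

theorem conformalDenom_le_four {w z : E} (hz : ‖z‖ ≤ 1) (hw : ‖w‖ ≤ 1) :
    conformalDenom w z ≤ 4 := by
  have hzw : ‖z‖ * ‖w‖ ≤ 1 := mul_le_one₀ hz (norm_nonneg w) hw
  calc conformalDenom w z ≤ (1 + ‖z‖ * ‖w‖) ^ 2 := conformalDenom_le_sq_one_add_norm_mul_norm w z
    _ ≤ (1 + 1) ^ 2 := by gcongr
    _ = 4 := by norm_num

end ConformalDenom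

theorem cderiv_eq_div {N : ℕ} (g : Equiv.Perm (Amb N)) (z : Amb N) :
    cderiv g z = (1 - ‖g.symm 0‖ ^ 2) / conformalDenom (g.symm 0) z :=
  rfl

namespace IsMobius

variable {N : ℕ} {g : Equiv.Perm (Amb N)}

theorem norm_symm_zero_lt_one (hg : IsMobius g) : ‖g.symm 0‖ < 1 :=
  hg.symm_maps_open 0 (by simp)

theorem conformalDenom_symm_zero_pos (hg : IsMobius g) {z : Amb N} (hz : ‖z‖ ≤ 1) :
    0 < conformalDenom (g.symm 0) z :=
  conformalDenom_pos <| (mul_le_of_le_one_left (norm_nonneg _) hz).trans_lt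
    hg.norm_symm_zero_lt_one

theorem one_sub_sq_norm_symm_zero_pos (hg : IsMobius g) : 0 < 1 - ‖g.symm 0‖ ^ 2 := by
  have := hg.norm_symm_zero_lt_one
  nlinarith [norm_nonneg (g.symm 0)]

theorem cderiv_pos (hg : IsMobius g) {z : Amb N} (hz : ‖z‖ ≤ 1) : 0 < cderiv g z :=
  div_pos hg.one_sub_sq_norm_symm_zero_pos (hg.conformalDenom_symm_zero_pos hz)

theorem cderiv_mul_le (hg : IsMobius g) {z ζ : Amb N} (hz : ‖z‖ ≤ 1) (hζ : ‖ζ‖ ≤ 1) :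
    (1 - ‖z‖) ^ 2 / 4 * cderiv g z ≤ cderiv g ζ := by
  set A := 1 - ‖g.symm 0‖ ^ 2
  have hA : 0 < A := hg.one_sub_sq_norm_symm_zero_pos
  have hw : ‖g.symm 0‖ ≤ 1 := hg.norm_symm_zero_lt_one.le
  calc (1 - ‖z‖) ^ 2 / 4 * cderiv g z
      = A / 4 * ((1 - ‖z‖) ^ 2 / conformalDenom (g.symm 0) z) := by
        rw [cderiv_eq_div]; ring
    _ ≤ A / 4 * 1 := by
        gcongr
        exact (div_le_one (hg.conformalDenom_symm_zero_pos hz)).2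
          (sq_one_sub_norm_le_conformalDenom hz hw)
    _ ≤ cderiv g ζ := by
        rw [mul_one, cderiv_eq_div]
        exact div_le_div_of_nonneg_left hA.le (hg.conformalDenom_symm_zero_pos hζ)
          (conformalDenom_le_four hζ hw)

end IsMobius

theorem summable_rpow_of_mul_le {ι : Type*} {f h : ι → ℝ} {c s : ℝ} (hc : 0 < c) (hs : 0 ≤ s)
    (hf : ∀ i, 0 ≤ f i) (hfh : ∀ i, c * f i ≤ h i) (hh : Summable fun i => h i ^ s) :
    Summable fun i => f i ^ s := by
  refine Summable.of_nonneg_of_le (fun i => Real.rpow_nonneg (hf i) s) (fun i => ?_)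
    (hh.mul_left (c⁻¹ ^ s))
  have hh0 : 0 ≤ h i := (mul_nonneg hc.le (hf i)).trans (hfh i)
  calc f i ^ s ≤ (c⁻¹ * h i) ^ s :=
        Real.rpow_le_rpow (hf i) ((le_inv_mul_iff₀ hc).2 (hfh i)) hs
    _ = c⁻¹ ^ s * h i ^ s := Real.mul_rpow (inv_nonneg.2 hc.le) hh0

/-- For a boundary point `ζ`, an interior point `z` and a
Möbius transformation `g` one has `j(g,ζ) ≥ ((1-|z|)²/4)·j(g,z)`; consequently,
if the horospherical Poincaré series `Σ_{g∈G} j(g,ζ)^s` of a Kleinian group `G`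
converges at `ζ`, then the Poincaré series `Σ_{g∈G} j(g,z)^s` converges for
every `z` in the ball. -/
theorem stmt_2 {N : ℕ} (G : Subgroup (Equiv.Perm (Amb N)))
    (hmob : ∀ g ∈ G, IsMobius g) (s : ℝ) (hs : 0 < s)
    (ζ : Amb N) (hζ : ‖ζ‖ = 1) :
    (∀ g : Equiv.Perm (Amb N), IsMobius g → ∀ z : Amb N, ‖z‖ < 1 →
      (1 - ‖z‖) ^ 2 / 4 * cderiv g z ≤ cderiv g ζ) ∧
    ((Summable fun g : G => cderiv (g : Equiv.Perm (Amb N)) ζ ^ s) →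
      ∀ z : Amb N, ‖z‖ < 1 →
        Summable fun g : G => cderiv (g : Equiv.Perm (Amb N)) z ^ s) := by
  refine ⟨fun g hg z hz => hg.cderiv_mul_le hz.le hζ.le, fun hsum z hz => ?_⟩
  have hc : 0 < (1 - ‖z‖) ^ 2 / 4 := by
    have : 0 < 1 - ‖z‖ := sub_pos.2 hz
    positivity
  exact summable_rpow_of_mul_le hc hs.le (fun g => ((hmob g g.2).cderiv_pos hz.le).le)
    (fun g => (hmob g g.2).cderiv_mul_le hz.le hζ.le) hsum
end
end

section
/- Let G be a Kleinian group and ζ an ordinary point of G, i.e. there exists c > 0 with |ζ - g^{-1}(0)|^2 ≥ c for all g ∈ G. If (z_n) is a sequence in the unit ball converging to ζ and the horospherical Poincaré series P(ζ,s) converges, then lim_{n→∞} P(z_n,s) = P(ζ,s). -/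
open MeasureTheory Filter
open scoped RealInnerProductSpace ENNReal BigOperators Topology

noncomputable section

/-! Each term `j(g, z_n)^s` tends to `j(g, ζ)^s`. Every orbit point `g⁻¹ 0` stays at distance
`≥ √c` from `ζ`, so once `|z_n - ζ| ≤ √c / 2` the triangle inequality gives
`|z_n - g⁻¹ 0| ≥ |ζ - g⁻¹ 0| / 2`, hence `j(g, z_n) ≤ 4 j(g, ζ)` uniformly in `g`, and
dominated convergence for series applies. -/

section ConformalDerivative

variable {N : ℕ} {g : Equiv.Perm (Amb N)}

theorem one_sub_two_inner_add_eq {E : Type*} [NormedAddCommGroup E] [InnerProductSpace ℝ E]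
    (x y : E) :
    1 - 2 * ⟪x, y⟫ + ‖x‖ ^ 2 * ‖y‖ ^ 2 = ‖x - y‖ ^ 2 + (1 - ‖x‖ ^ 2) * (1 - ‖y‖ ^ 2) := by
  rw [norm_sub_sq_real]
  ring

theorem sq_norm_sub_le_one_sub_two_inner_add {E : Type*} [NormedAddCommGroup E]
    [InnerProductSpace ℝ E] {x y : E} (hx : ‖x‖ ≤ 1) (hy : ‖y‖ ≤ 1) :
    ‖x - y‖ ^ 2 ≤ 1 - 2 * ⟪x, y⟫ + ‖x‖ ^ 2 * ‖y‖ ^ 2 := by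
  have hx' : 0 ≤ 1 - ‖x‖ ^ 2 := by nlinarith [norm_nonneg x]
  have hy' : 0 ≤ 1 - ‖y‖ ^ 2 := by nlinarith [norm_nonneg y]
  rw [one_sub_two_inner_add_eq]
  nlinarith [mul_nonneg hx' hy']

theorem cderiv_of_norm_eq_one {ζ : Amb N} (hζ : ‖ζ‖ = 1) :
    cderiv g ζ = (1 - ‖g.symm 0‖ ^ 2) / ‖ζ - g.symm 0‖ ^ 2 := by
  rw [cderiv, one_sub_two_inner_add_eq, hζ]
  ring_nf

theorem cderiv_nonneg {x : Amb N} (hg : ‖g.symm 0‖ ≤ 1) (hx : ‖x‖ ≤ 1) : 0 ≤ cderiv g x :=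
  div_nonneg (by nlinarith [norm_nonneg (g.symm 0)])
    ((sq_nonneg _).trans (sq_norm_sub_le_one_sub_two_inner_add hx hg))

theorem continuousAt_cderiv {ζ : Amb N} (hζ : ‖ζ‖ = 1) (hne : ζ ≠ g.symm 0) :
    ContinuousAt (cderiv g) ζ := by
  have hden : 1 - 2 * ⟪ζ, g.symm 0⟫ + ‖ζ‖ ^ 2 * ‖g.symm 0‖ ^ 2 ≠ 0 := by
    rw [one_sub_two_inner_add_eq, hζ]
    simpa [sub_eq_zero] using hne
  unfold cderiv
  fun_prop (disch := exact hden)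

theorem cderiv_le_four_mul {ζ x : Amb N} (hg : ‖g.symm 0‖ ≤ 1) (hζ : ‖ζ‖ = 1)
    (hne : ζ ≠ g.symm 0) (hx : ‖x‖ ≤ 1) (hxζ : 2 * ‖ζ - x‖ ≤ ‖ζ - g.symm 0‖) :
    cderiv g x ≤ 4 * cderiv g ζ := by
  set w := g.symm 0 with hw
  have hnum : 0 ≤ 1 - ‖w‖ ^ 2 := by nlinarith [norm_nonneg w]
  have hζw : 0 < ‖ζ - w‖ := norm_pos_iff.2 (sub_ne_zero.2 hne)
  have hxw : ‖ζ - w‖ ≤ 2 * ‖x - w‖ := by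
    linarith [norm_sub_le_norm_sub_add_norm_sub ζ x w]
  have hden : ‖ζ - w‖ ^ 2 / 4 ≤ 1 - 2 * ⟪x, w⟫ + ‖x‖ ^ 2 * ‖w‖ ^ 2 := by
    have := sq_norm_sub_le_one_sub_two_inner_add hx hg
    nlinarith
  calc cderiv g x ≤ (1 - ‖w‖ ^ 2) / (‖ζ - w‖ ^ 2 / 4) :=
        div_le_div_of_nonneg_left hnum (by positivity) hden
    _ = 4 * cderiv g ζ := by
        rw [cderiv_of_norm_eq_one hζ, ← hw]
        field_simp

theorem norm_cderiv_rpow_le {ζ x : Amb N} {s : ℝ} (hs : 0 ≤ s) (hg : ‖g.symm 0‖ ≤ 1)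
    (hζ : ‖ζ‖ = 1) (hne : ζ ≠ g.symm 0) (hx : ‖x‖ ≤ 1) (hxζ : 2 * ‖ζ - x‖ ≤ ‖ζ - g.symm 0‖) :
    ‖cderiv g x ^ s‖ ≤ 4 ^ s * cderiv g ζ ^ s := by
  have hx₀ := cderiv_nonneg hg hx
  calc ‖cderiv g x ^ s‖ = cderiv g x ^ s := Real.norm_of_nonneg (Real.rpow_nonneg hx₀ s)
    _ ≤ (4 * cderiv g ζ) ^ s := Real.rpow_le_rpow hx₀ (cderiv_le_four_mul hg hζ hne hx hxζ) hs
    _ = 4 ^ s * cderiv g ζ ^ s := Real.mul_rpow (by norm_num) (cderiv_nonneg hg hζ.le)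

end ConformalDerivative

/-- If `ζ` is an ordinary point of the Kleinian group `G`
(`|ζ-g⁻¹(0)|² ≥ c > 0` for all `g ∈ G`), `(z_n)` is a sequence in the ball
converging to `ζ`, and the horospherical Poincaré series `P(ζ,s)` converges,
then `P(z_n,s) → P(ζ,s)`. -/
theorem stmt_5 {N : ℕ} (G : Subgroup (Equiv.Perm (Amb N)))
    (hmob : ∀ g ∈ G, IsMobius g) (s : ℝ) (hs : 0 < s)
    (ζ : Amb N) (hζ : ‖ζ‖ = 1) (c : ℝ) (hc : 0 < c)
    (hord : ∀ g ∈ G, c ≤ ‖ζ - (Equiv.symm g) 0‖ ^ 2)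
    (z : ℕ → Amb N) (hz : ∀ n, ‖z n‖ < 1)
    (hlim : Tendsto z atTop (𝓝 ζ))
    (hP : Summable fun g : G => cderiv (g : Equiv.Perm (Amb N)) ζ ^ s) :
    Tendsto (fun n => ∑' g : G, cderiv (g : Equiv.Perm (Amb N)) (z n) ^ s)
      atTop (𝓝 (∑' g : G, cderiv (g : Equiv.Perm (Amb N)) ζ ^ s)) := by
  have horigin (g : G) : ‖(g : Equiv.Perm (Amb N)).symm 0‖ < 1 :=
    (hmob g g.2).symm_maps_open 0 (by simp)
  have hsep (g : G) : √c ≤ ‖ζ - (g : Equiv.Perm (Amb N)).symm 0‖ :=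
    (Real.sqrt_le_left (norm_nonneg _)).2 (hord g g.2)
  have hne (g : G) : ζ ≠ (g : Equiv.Perm (Amb N)).symm 0 := fun h =>
    (Real.sqrt_pos.2 hc).not_ge (by simpa [h] using hsep g)
  have hpt (g : G) : Tendsto (fun n => cderiv (g : Equiv.Perm (Amb N)) (z n) ^ s) atTop
      (𝓝 (cderiv (g : Equiv.Perm (Amb N)) ζ ^ s)) :=
    ((continuousAt_cderiv hζ (hne g)).tendsto.comp hlim).rpow_const (Or.inr hs.le)
  have hclose : ∀ᶠ n in atTop, 2 * ‖ζ - z n‖ ≤ √c := by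
    filter_upwards [hlim.eventually (Metric.closedBall_mem_nhds ζ (by positivity : 0 < √c / 2))]
      with n hn
    rw [dist_eq_norm, norm_sub_rev] at hn
    linarith
  have hbound : ∀ᶠ n in atTop, ∀ g : G,
      ‖cderiv (g : Equiv.Perm (Amb N)) (z n) ^ s‖
        ≤ 4 ^ s * cderiv (g : Equiv.Perm (Amb N)) ζ ^ s := by
    filter_upwards [hclose] with n hn g
    exact norm_cderiv_rpow_le hs.le (horigin g).le hζ (hne g) (hz n).le (hn.trans (hsep g))
  exact tendsto_tsum_of_dominated_convergence (hP.mul_left _) hpt hbound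
end
end

section
/- Suppose a Kleinian group G acts dissipatively on a G-invariant measurable set A with measurable fundamental set E (so E meets each orbit in A in exactly one point), μ is an s-conformal probability measure for G, and E_n := {ζ ∈ E : #Stab_G(ζ) ≤ n} has μ(E_n) > 0 for some n. Then Σ_{g∈G} μ(g(E_n)) ≤ n, hence ∫_{E_n} P(ζ,s) dμ(ζ) ≤ n where P(ζ,s) = Σ_{g∈G} j(g,ζ)^s, and therefore P(ζ,s) < ∞ for μ-almost every ζ ∈ E_n. -/
open MeasureTheory Filter
open scoped RealInnerProductSpace ENNReal BigOperators Topology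

noncomputable section

/- The sets `g(E_n)` overlap with multiplicity at most `n`: if `x = g₀ e` with `e ∈ E_n`, then
`{g | x ∈ g(E_n)}` is the coset `g₀ Stab(e)`, because `E_n` meets each orbit only once. Integrating
the multiplicity gives `Σ_g μ(g(E_n)) ≤ n`, and conformality turns `μ(g(E_n))` into
`∫_{E_n} j(g,·)^s dμ`, so the Poincaré series has integral at most `n` over `E_n`. -/

open scoped Pointwise

theorem tsum_measure_eq_lintegral_encard {ι α : Type*} [Countable ι] [MeasurableSpace α]
    (μ : Measure α) {S : ι → Set α} (hS : ∀ i, MeasurableSet (S i)) :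
    ∑' i, μ (S i) = ∫⁻ x, ({i | x ∈ S i}.encard : ℝ≥0∞) ∂μ := by
  have hcount : ∀ x, ∑' i, (S i).indicator 1 x = ({i | x ∈ S i}.encard : ℝ≥0∞) := fun x => by
    rw [← ENNReal.tsum_set_one, tsum_subtype {i | x ∈ S i} fun _ => (1 : ℝ≥0∞)]
    rfl
  simp_rw [← hcount, ← lintegral_indicator_one (hS _)]
  exact (lintegral_tsum fun i => (measurable_one.indicator (hS i)).aemeasurable).symm

theorem tsum_measure_le_of_encard_le {ι α : Type*} [Countable ι] [MeasurableSpace α]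
    (μ : Measure α) {S : ι → Set α} (hS : ∀ i, MeasurableSet (S i)) {n : ℕ∞}
    (hmul : ∀ x, {i | x ∈ S i}.encard ≤ n) :
    ∑' i, μ (S i) ≤ n * μ Set.univ := by
  rw [tsum_measure_eq_lintegral_encard μ hS, ← lintegral_const]
  exact lintegral_mono fun x => ENat.toENNReal_le.mpr (hmul x)

section OrbitTransversal

variable {G α : Type*} [Group G] [MulAction G α] {E : Set α}

theorem setOf_mem_smul_eq_smul_stabilizer
    (hE : ∀ e ∈ E, ∀ g : G, g • e ∈ E → g • e = e) {g₀ : G} {e : α} (he : e ∈ E) :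
    {g : G | g₀ • e ∈ g • E} = g₀ • (MulAction.stabilizer G e : Set G) := by
  ext g
  have hswap : g⁻¹ • g₀ • e = e ↔ g₀⁻¹ • g • e = e := by
    rw [inv_smul_eq_iff, inv_smul_eq_iff, eq_comm]
  rw [Set.mem_smul_set_iff_inv_smul_mem, Set.mem_ofPred_eq, Set.mem_smul_set_iff_inv_smul_mem,
    SetLike.mem_coe, MulAction.mem_stabilizer_iff, smul_eq_mul, mul_smul, ← hswap]
  refine ⟨fun h => ?_, fun h => by rwa [h]⟩
  rw [← mul_smul] at h ⊢
  exact hE e he _ h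

theorem encard_setOf_mem_smul_le
    (hE : ∀ e ∈ E, ∀ g : G, g • e ∈ E → g • e = e) {n : ℕ∞}
    (hstab : ∀ e ∈ E, (MulAction.stabilizer G e : Set G).encard ≤ n) (x : α) :
    {g : G | x ∈ g • E}.encard ≤ n := by
  by_cases hx : ∃ g₀ : G, x ∈ g₀ • E
  · obtain ⟨g₀, e, he, rfl⟩ := hx
    rw [setOf_mem_smul_eq_smul_stabilizer hE he, Set.encard_smul_set]
    exact hstab e he
  · simp [not_exists.mp hx]

end OrbitTransversal

theorem measurable_cderiv {N : ℕ} (g : Equiv.Perm (Amb N)) : Measurable (cderiv g) := by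
  unfold cderiv
  fun_prop

theorem stmt_15_general {N : ℕ} (G : Subgroup (Equiv.Perm (Amb N))) [Countable ↥G]
    (hmob : ∀ g ∈ G, IsMobius g) (s : ℝ)
    (μ : Measure (Amb N)) [IsProbabilityMeasure μ]
    (hconf : ∀ g ∈ G, ∀ A' : Set (Amb N), MeasurableSet A' →
      μ (⇑g '' A') = ∫⁻ x in A', ENNReal.ofReal (cderiv g x ^ s) ∂μ)
    (A E : Set (Amb N)) (hEA : E ⊆ A)
    (hfund : ∀ a ∈ A, ∃! e, e ∈ E ∧ ∃ g ∈ G, g a = e)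
    (n : ℕ) (En : Set (Amb N))
    (hEn : En = {x ∈ E |
      ({g : ↥G | (g : Equiv.Perm (Amb N)) x = x}).Finite ∧
      Nat.card {g : ↥G | (g : Equiv.Perm (Amb N)) x = x} ≤ n})
    (hmeasEn : MeasurableSet En) :
    (∑' g : G, μ (⇑(g : Equiv.Perm (Amb N)) '' En)) ≤ (n : ℝ≥0∞) ∧
    (∫⁻ x in En,
        ∑' g : G, ENNReal.ofReal (cderiv (g : Equiv.Perm (Amb N)) x ^ s) ∂μ) ≤
      (n : ℝ≥0∞) ∧
    (∀ᵐ x ∂(μ.restrict En),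
      (∑' g : G, ENNReal.ofReal (cderiv (g : Equiv.Perm (Amb N)) x ^ s)) < ⊤) := by
  have hEnE : En ⊆ E := by rw [hEn]; exact fun x hx => hx.1
  have horbit : ∀ e ∈ En, ∀ g : G, g • e ∈ En → g • e = e := fun e he g hge =>
    (hfund e (hEA (hEnE he))).unique ⟨hEnE hge, g, g.2, rfl⟩ ⟨hEnE he, 1, G.one_mem, rfl⟩
  have hstab : ∀ e ∈ En, (MulAction.stabilizer G e : Set G).encard ≤ n := by
    rw [hEn]
    rintro e ⟨-, hfin, hcard⟩
    change {g : G | (g : Equiv.Perm (Amb N)) e = e}.encard ≤ n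
    rw [← hfin.cast_ncard_eq, ← Nat.card_coe_set_eq]
    exact_mod_cast hcard
  have himg : ∀ g : G, MeasurableSet (⇑(g : Equiv.Perm (Amb N)) '' En) := fun g => by
    rw [Equiv.image_eq_preimage_symm]
    exact hmeasEn.preimage (hmob g g.2).continuous_symm.measurable
  have hsum : ∑' g : G, μ (⇑(g : Equiv.Perm (Amb N)) '' En) ≤ n := by
    simpa using tsum_measure_le_of_encard_le μ himg (encard_setOf_mem_smul_le horbit hstab)
  have hdens : ∀ g : G,
      Measurable fun x => ENNReal.ofReal (cderiv (g : Equiv.Perm (Amb N)) x ^ s) := fun g =>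
    ((measurable_cderiv _).pow_const s).ennreal_ofReal
  have hint :
      ∫⁻ x in En, ∑' g : G, ENNReal.ofReal (cderiv (g : Equiv.Perm (Amb N)) x ^ s) ∂μ ≤ n := by
    rw [lintegral_tsum fun g => (hdens g).aemeasurable]
    simpa only [hconf _ (Subtype.prop _) En hmeasEn] using hsum
  exact ⟨hsum, hint, ae_lt_top (Measurable.tsum hdens) (hint.trans_lt (by simp)).ne⟩

/-- Suppose the Kleinian group `G` acts dissipatively on a
`G`-invariant set `A` with measurable fundamental set `E` (meeting each orbit
in `A` exactly once), `μ` is an `s`-conformal probability measure for `G`, and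
`E_n = {ζ ∈ E : #Stab_G(ζ) ≤ n}` has `μ(E_n) > 0`.  Then
`Σ_{g∈G} μ(g(E_n)) ≤ n`, hence `∫_{E_n} P(ζ,s) dμ(ζ) ≤ n` where
`P(ζ,s) = Σ_{g∈G} j(g,ζ)^s`, and therefore `P(ζ,s) < ∞` for `μ`-a.e.
`ζ ∈ E_n`. -/
theorem stmt_15 {N : ℕ} (G : Subgroup (Equiv.Perm (Amb N))) [Countable ↥G]
    (hmob : ∀ g ∈ G, IsMobius g) (s : ℝ) (hs : 0 < s)
    (μ : Measure (Amb N)) [IsProbabilityMeasure μ]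
    (hconf : ∀ g ∈ G, ∀ A' : Set (Amb N), MeasurableSet A' →
      μ (⇑g '' A') = ∫⁻ x in A', ENNReal.ofReal (cderiv g x ^ s) ∂μ)
    (A E : Set (Amb N)) (hEA : E ⊆ A) (hE : MeasurableSet E)
    (hAinv : ∀ g ∈ G, ⇑g '' A = A)
    (hfund : ∀ a ∈ A, ∃! e, e ∈ E ∧ ∃ g ∈ G, g a = e)
    (n : ℕ) (En : Set (Amb N))
    (hEn : En = {x ∈ E |
      ({g : ↥G | (g : Equiv.Perm (Amb N)) x = x}).Finite ∧
      Nat.card {g : ↥G | (g : Equiv.Perm (Amb N)) x = x} ≤ n})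
    (hmeasEn : MeasurableSet En) (hpos : 0 < μ En) :
    (∑' g : G, μ (⇑(g : Equiv.Perm (Amb N)) '' En)) ≤ (n : ℝ≥0∞) ∧
    (∫⁻ x in En,
        ∑' g : G, ENNReal.ofReal (cderiv (g : Equiv.Perm (Amb N)) x ^ s) ∂μ) ≤
      (n : ℝ≥0∞) ∧
    (∀ᵐ x ∂(μ.restrict En),
      (∑' g : G, ENNReal.ofReal (cderiv (g : Equiv.Perm (Amb N)) x ^ s)) < ⊤) :=
  stmt_15_general G hmob s μ hconf A E hEA hfund n En hEn hmeasEn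
end
end

section
/- Let μ be an s-conformal measure for a Kleinian group G and suppose ζ is a boundary point such that there exist c > 0 and infinitely many g ∈ G with j(g,ζ) > c and the points g(ζ) pairwise distinct (e.g. Stab_G(ζ) finite and the orbit of 0 under G^{-1} accumulating at ζ inside a horoball). Then μ({ζ}) = 0. -/
open MeasureTheory Filter
open scoped RealInnerProductSpace ENNReal BigOperators Topology

noncomputable section

theorem MeasureTheory.eq_zero_of_le_measure_singleton_of_injective {α ι : Type*}
    [MeasurableSpace α] [MeasurableSingletonClass α] (μ : Measure α) [IsFiniteMeasure μ]
    [Infinite ι] {x : ι → α} (hx : Function.Injective x) {ε : ℝ≥0∞}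
    (h : ∀ i, ε ≤ μ {x i}) : ε = 0 := by
  by_contra hε
  exact measure_ne_top μ _ <| (Set.infinite_range_of_injective hx).meas_eq_top
    ⟨ε, hε, Set.forall_mem_range.2 h⟩

theorem stmt_19_general {N : ℕ} (G : Subgroup (Equiv.Perm (Amb N)))
    (s : ℝ) (hs : 0 < s)
    (ζ : Amb N) (c : ℝ) (hc : 0 < c)
    (μ : Measure (Amb N)) [IsFiniteMeasure μ]
    (hconf : ∀ g ∈ G,
      μ {g ζ} = ENNReal.ofReal (cderiv g ζ ^ s) * μ {ζ})
    (hinf : ∃ f : ℕ → Equiv.Perm (Amb N), (∀ i, f i ∈ G) ∧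
      Function.Injective (fun i => f i ζ) ∧ ∀ i, c < cderiv (f i) ζ) :
    μ {ζ} = 0 := by
  obtain ⟨f, hfG, hfinj, hfc⟩ := hinf
  have hmass : ∀ i, ENNReal.ofReal (c ^ s) * μ {ζ} ≤ μ {f i ζ} := fun i => by
    rw [hconf _ (hfG i)]
    gcongr
    exact (hfc i).le
  have hc_pow : ENNReal.ofReal (c ^ s) ≠ 0 := by positivity
  simpa [hc_pow] using eq_zero_of_le_measure_singleton_of_injective μ hfinj hmass

/-- Let `μ` be a finite `s`-conformal measure for the
Kleinian group `G` and `ζ` a boundary point such that for some `c > 0` there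
are infinitely many `g ∈ G` (an injective sequence of orbit points `g(ζ)`) with
`j(g,ζ) > c`.  Then `μ({ζ}) = 0`. -/
theorem stmt_19 {N : ℕ} (G : Subgroup (Equiv.Perm (Amb N)))
    (hmob : ∀ g ∈ G, IsMobius g) (s : ℝ) (hs : 0 < s)
    (ζ : Amb N) (hζ : ‖ζ‖ = 1) (c : ℝ) (hc : 0 < c)
    (μ : Measure (Amb N)) [IsFiniteMeasure μ]
    (hconf : ∀ g ∈ G,
      μ {g ζ} = ENNReal.ofReal (cderiv g ζ ^ s) * μ {ζ})
    (hinf : ∃ f : ℕ → Equiv.Perm (Amb N), (∀ i, f i ∈ G) ∧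
      Function.Injective (fun i => f i ζ) ∧ ∀ i, c < cderiv (f i) ζ) :
    μ {ζ} = 0 :=
  stmt_19_general G s hs ζ c hc μ hconf hinf
end
end
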